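/- Convexity of the type-II marginal likelihood objective: for any positive integer k, the function κ(α) = −log(Γ(k+α)/Γ(α)) − α·log(α/(α+k)) − k·log(k/(α+k)) is strictly convex on (0,∞), since κ''(α) = ∑_{l=0}^{k−1} 1/(α+l)² − k/(α(α+k)) > 0 for all α > 0. -/

import Mathlib

open Finset

private lemma psi_strictConvex (c : ℝ) (hc : 0 ≤ c) :
    StrictConvexOn ℝ (Set.Ioi (0:ℝ))
      (fun α : ℝ => -Real.log (α + c) + (α + c + 1) * Real.log (α + c + 1)
        - (α + c) * Real.log (α + c)) := by
  set f : ℝ → ℝ := fun α => -Real.log (α + c) + (α + c + 1) * Real.log (α + c + 1)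
        - (α + c) * Real.log (α + c) with hf
  set g : ℝ → ℝ := fun α => -(α + c)⁻¹ + Real.log (α + c + 1) - Real.log (α + c) with hgdef
  have hpos : ∀ x : ℝ, x ∈ Set.Ioi (0:ℝ) → 0 < x + c := fun x hx => by
    have : (0:ℝ) < x := hx; linarith
  have hderiv1 : ∀ x ∈ Set.Ioi (0:ℝ), HasDerivAt f (g x) x := by
    intro x hx
    have h1 : (0:ℝ) < x + c := hpos x hx
    have h2 : (0:ℝ) < x + c + 1 := by linarith
    have hd : HasDerivAt (fun y : ℝ => y + c) 1 x := (hasDerivAt_id x).add_const c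
    have hd2 : HasDerivAt (fun y : ℝ => y + c + 1) 1 x := hd.add_const 1
    have hl : HasDerivAt (fun y : ℝ => Real.log (y + c)) (1 / (x + c)) x := by
      simpa using hd.log h1.ne'
    have hl2 : HasDerivAt (fun y : ℝ => Real.log (y + c + 1)) (1 / (x + c + 1)) x := by
      simpa using hd2.log h2.ne'
    have := ((hl.neg.add (hd2.mul hl2)).sub (hd.mul hl))
    refine this.congr_deriv ?_
    simp only [hgdef]
    field_simp
    ring
  have hderiv2 : ∀ x ∈ Set.Ioi (0:ℝ),
      HasDerivAt g ((x + c)⁻¹ ^ 2 + 1 / (x + c + 1) - 1 / (x + c)) x := by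
    intro x hx
    have h1 : (0:ℝ) < x + c := hpos x hx
    have h2 : (0:ℝ) < x + c + 1 := by linarith
    have hd : HasDerivAt (fun y : ℝ => y + c) 1 x := (hasDerivAt_id x).add_const c
    have hd2 : HasDerivAt (fun y : ℝ => y + c + 1) 1 x := hd.add_const 1
    have hinv : HasDerivAt (fun y : ℝ => (y + c)⁻¹) (-1 / (x + c) ^ 2) x := by
      exact hd.inv h1.ne'
    have hl : HasDerivAt (fun y : ℝ => Real.log (y + c)) (1 / (x + c)) x := by
      simpa using hd.log h1.ne'
    have hl2 : HasDerivAt (fun y : ℝ => Real.log (y + c + 1)) (1 / (x + c + 1)) x := by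
      simpa using hd2.log h2.ne'
    have := (hinv.neg.add hl2).sub hl
    refine this.congr_deriv ?_
    field_simp
  have hopen : interior (Set.Ioi (0:ℝ)) = Set.Ioi 0 := interior_Ioi
  apply strictConvexOn_of_deriv2_pos (convex_Ioi 0)
  · -- continuity
    intro x hx
    have h1 : (0:ℝ) < x + c := hpos x hx
    exact ((hderiv1 x hx).differentiableAt.continuousAt).continuousWithinAt
  · intro x hx
    rw [hopen] at hx
    have h1 : (0:ℝ) < x + c := hpos x hx
    have h2 : (0:ℝ) < x + c + 1 := by linarith
    have heq : deriv f =ᶠ[nhds x] g := by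
      filter_upwards [isOpen_Ioi.mem_nhds hx] with y hy
      exact (hderiv1 y hy).deriv
    have : deriv^[2] f x = deriv g x := by
      simp only [Function.iterate_succ, Function.iterate_zero, Function.comp_apply, id]
      exact heq.deriv_eq
    rw [this, (hderiv2 x hx).deriv]
    have hkey : (x + c)⁻¹ ^ 2 + 1 / (x + c + 1) - 1 / (x + c)
        = 1 / ((x + c) ^ 2 * (x + c + 1)) := by
      field_simp
      ring
    rw [hkey]
    positivity

private lemma sum_psi_strictConvex (m : ℕ) :
    StrictConvexOn ℝ (Set.Ioi (0:ℝ))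
      (fun α : ℝ => ∑ l ∈ Finset.range (m + 1),
        (-Real.log (α + l) + (α + l + 1) * Real.log (α + l + 1)
          - (α + l) * Real.log (α + l))) := by
  induction m with
  | zero => simpa using psi_strictConvex 0 le_rfl
  | succ n ih =>
      have hfun : (fun α : ℝ => ∑ l ∈ Finset.range (n + 1 + 1),
          (-Real.log (α + l) + (α + l + 1) * Real.log (α + l + 1)
            - (α + l) * Real.log (α + l)))
          = (fun α : ℝ => ∑ l ∈ Finset.range (n + 1),
              (-Real.log (α + l) + (α + l + 1) * Real.log (α + l + 1)
                - (α + l) * Real.log (α + l)))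
            + (fun α : ℝ => -Real.log (α + ((n : ℝ) + 1))
                + (α + ((n : ℝ) + 1) + 1) * Real.log (α + ((n : ℝ) + 1) + 1)
                - (α + ((n : ℝ) + 1)) * Real.log (α + ((n : ℝ) + 1))) := by
        funext α
        rw [Finset.sum_range_succ]
        push_cast
        simp [Pi.add_apply]
      rw [hfun]
      exact ih.add (psi_strictConvex ((n : ℝ) + 1) (by positivity))

private lemma gamma_ratio (k : ℕ) (α : ℝ) (hα : 0 < α) :
    Real.Gamma ((k : ℝ) + α) = (∏ l ∈ Finset.range k, (α + l)) * Real.Gamma α := by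
  induction k with
  | zero => simp
  | succ n ih =>
      have hne : α + n ≠ 0 := by positivity
      have : ((n : ℝ) + 1) + α = (α + n) + 1 := by ring
      rw [Nat.cast_succ, this, Real.Gamma_add_one hne]
      have h2 : (α : ℝ) + n = (n : ℝ) + α := by ring
      rw [h2, ih, Finset.prod_range_succ]
      ring


/-- The type-II marginal likelihood objective
`κ(α) = −log(Γ(k+α)/Γ(α)) − α·log(α/(α+k)) − k·log(k/(α+k))`
is strictly convex on `(0,∞)`, since
`κ''(α) = ∑_{l<k} 1/(α+l)² − k/(α(α+k)) > 0` for all `α > 0`. -/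
theorem typeII_objective_strictConvex (k : ℕ) (hk : 1 ≤ k) :
    StrictConvexOn ℝ (Set.Ioi (0 : ℝ))
      (fun α : ℝ =>
        -Real.log (Real.Gamma ((k : ℝ) + α) / Real.Gamma α)
          - α * Real.log (α / (α + k))
          - (k : ℝ) * Real.log ((k : ℝ) / (α + k)))
    ∧ ∀ α : ℝ, 0 < α →
        0 < (∑ l ∈ Finset.range k, 1 / (α + l) ^ 2) - (k : ℝ) / (α * (α + k)) := by
  constructor
  · -- strict convexity
    obtain ⟨m, rfl⟩ : ∃ m, k = m + 1 := ⟨k - 1, (Nat.succ_pred_eq_of_pos hk).symm⟩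
    set K := m + 1 with hK
    have hF := (sum_psi_strictConvex m).add_const (-(K : ℝ) * Real.log K)
    have heq : ∀ α ∈ Set.Ioi (0:ℝ),
        (-Real.log (Real.Gamma ((K : ℝ) + α) / Real.Gamma α)
          - α * Real.log (α / (α + K))
          - (K : ℝ) * Real.log ((K : ℝ) / (α + K)))
        = (∑ l ∈ Finset.range K,
            (-Real.log (α + l) + (α + l + 1) * Real.log (α + l + 1)
              - (α + l) * Real.log (α + l))) + -(K : ℝ) * Real.log K := by
      intro α hα
      have hα' : (0:ℝ) < α := hα
      have hΓ : 0 < Real.Gamma α := Real.Gamma_pos_of_pos hα'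
      have hαK : (0:ℝ) < α + K := by positivity
      have hKpos : (0:ℝ) < K := by positivity
      -- log of Gamma ratio
      have hlog : Real.log (Real.Gamma ((K : ℝ) + α) / Real.Gamma α)
          = ∑ l ∈ Finset.range K, Real.log (α + l) := by
        rw [gamma_ratio K α hα', mul_div_assoc, div_self hΓ.ne', mul_one]
        rw [Real.log_prod]
        intro l hl
        have : (0:ℝ) < α + l := by positivity
        exact this.ne'
      rw [hlog]
      rw [Real.log_div hα'.ne' hαK.ne', Real.log_div hKpos.ne' hαK.ne']
      -- telescoping sum
      have htel : ∑ l ∈ Finset.range K,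
          ((α + l + 1) * Real.log (α + l + 1) - (α + l) * Real.log (α + l))
          = (α + K) * Real.log (α + K) - α * Real.log α := by
        have h0 := Finset.sum_range_sub (fun l : ℕ => (α + l) * Real.log (α + l)) K
        simp only [Nat.cast_zero, add_zero] at h0
        rw [← h0]
        apply Finset.sum_congr rfl
        intro l _
        push_cast
        ring_nf
      have hsplit : ∑ l ∈ Finset.range K,
          (-Real.log (α + l) + (α + l + 1) * Real.log (α + l + 1)
              - (α + l) * Real.log (α + l))
          = -(∑ l ∈ Finset.range K, Real.log (α + l))
            + ((α + K) * Real.log (α + K) - α * Real.log α) := by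
        rw [← htel, ← Finset.sum_neg_distrib, ← Finset.sum_add_distrib]
        apply Finset.sum_congr rfl
        intro l _
        ring
      rw [hsplit]
      ring
    refine ⟨hF.1, fun x hx y hy hxy a b ha hb hab => ?_⟩
    have hmem : a • x + b • y ∈ Set.Ioi (0:ℝ) := hF.1 hx hy ha.le hb.le hab
    dsimp only
    rw [heq _ hmem, heq _ hx, heq _ hy]
    exact hF.2 hx hy hxy ha hb hab
  · -- second derivative inequality
    intro α hα
    have hne : k ≠ 0 := by omega
    have hlt : ∑ l ∈ Finset.range k, (1 / (α + l) - 1 / (α + l + 1))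
        < ∑ l ∈ Finset.range k, 1 / (α + l) ^ 2 := by
      apply Finset.sum_lt_sum_of_nonempty (Finset.nonempty_range_iff.mpr hne)
      intro l _
      have h1 : (0:ℝ) < α + l := by positivity
      have h2 : (0:ℝ) < α + l + 1 := by linarith
      rw [div_sub_div _ _ h1.ne' h2.ne', div_lt_div_iff₀ (by positivity) (by positivity)]
      nlinarith
    have htel : ∑ l ∈ Finset.range k, (1 / (α + l) - 1 / (α + l + 1))
        = 1 / α - 1 / (α + k) := by
      have h0 := Finset.sum_range_sub' (fun l : ℕ => 1 / (α + l)) k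
      simp only [Nat.cast_zero, add_zero] at h0
      rw [← h0]
      apply Finset.sum_congr rfl
      intro l _
      push_cast
      ring_nf
    have hfrac : (k : ℝ) / (α * (α + k)) = 1 / α - 1 / (α + k) := by
      have h1 : (0:ℝ) < α + k := by positivity
      field_simp
      ring
    rw [hfrac]
    linarith [htel ▸ hlt]
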